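/- Deleting a definitely-proved literal from a strict rule body preserves consequences: Let D be a basic defeasible theory interpreted with separated reasoning, let r be a strict rule of D whose body contains the literal q, and suppose D ⊢ +Δq. Let D' be obtained from D by replacing r with the rule r' that is r with q deleted from its body. Then D ≡ D', i.e. D and D' have identical sets of consequences (including extended conclusions). -/

import Mathlib

/-- A propositional literal: an atom or its negation. -/
inductive Lit where
  | pos : ℕ → Lit
  | neg : ℕ → Lit
deriving DecidableEq

/-- The complement ~q of a literal q. -/
def Lit.compl : Lit → Lit
  | .pos n => .neg n
  | .neg n => .pos n

/-- The atom underlying a literal. -/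
def Lit.atom : Lit → ℕ
  | .pos n => n
  | .neg n => n

/-- The three kinds of rules: strict (→), defeasible (⇒), defeater (⇝). -/
inductive RuleKind where
  | strict | defeasible | defeater
deriving DecidableEq

/-- A rule: a finite body of literals, a head literal, and a kind. -/
structure Rule where
  body : Finset Lit
  head : Lit
  kind : RuleKind
deriving DecidableEq

/-- A propositional defeasible theory: finite facts, finite rules, and an
acyclic superiority relation on rules. -/
structure DTheory where
  facts : Finset Lit
  rules : Finset Rule
  sup : Rule → Rule → Prop
  sup_acyclic : ∀ r, ¬ Relation.TransGen sup r r

/-- Tagged literals (extended conclusions): tags ±Δ, ±∂, ±σ. -/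
inductive TaggedLit where
  | pDelta : Lit → TaggedLit
  | mDelta : Lit → TaggedLit
  | pPartial : Lit → TaggedLit
  | mPartial : Lit → TaggedLit
  | pSigma : Lit → TaggedLit
  | mSigma : Lit → TaggedLit
deriving DecidableEq

/-- The literal of a tagged literal. -/
def TaggedLit.lit : TaggedLit → Lit
  | .pDelta q => q
  | .mDelta q => q
  | .pPartial q => q
  | .mPartial q => q
  | .pSigma q => q
  | .mSigma q => q

/-- Tagged literals whose tag is among +Δ, −Δ, +∂, −∂ (conclusions proper). -/
def TaggedLit.IsConclusionTag : TaggedLit → Prop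
  | .pDelta _ => True
  | .mDelta _ => True
  | .pPartial _ => True
  | .mPartial _ => True
  | .pSigma _ => False
  | .mSigma _ => False

/-- R_s[q]: strict rules with head q. -/
def DTheory.Rs (D : DTheory) (q : Lit) : Set Rule :=
  {r | r ∈ D.rules ∧ r.kind = RuleKind.strict ∧ r.head = q}

/-- R_sd[q]: strict and defeasible rules with head q. -/
def DTheory.Rsd (D : DTheory) (q : Lit) : Set Rule :=
  {r | r ∈ D.rules ∧ r.kind ≠ RuleKind.defeater ∧ r.head = q}

/-- R_d[q]: defeasible rules with head q. -/
def DTheory.Rd (D : DTheory) (q : Lit) : Set Rule :=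
  {r | r ∈ D.rules ∧ r.kind = RuleKind.defeasible ∧ r.head = q}

/-- R[q]: all rules with head q. -/
def DTheory.Rall (D : DTheory) (q : Lit) : Set Rule :=
  {r | r ∈ D.rules ∧ r.head = q}

/-- The rules used for defeasible provability (tags ±∂, ±σ): under separated
reasoning (`sep = true`) these are the defeasible rules R_d[q]; under the
standard interpretation (`sep = false`) they are R_sd[q]. -/
def DTheory.RD (D : DTheory) (sep : Bool) (q : Lit) : Set Rule :=
  if sep then D.Rd q else D.Rsd q

/-- `Step sep D S c` holds iff the tagged literal `c` may be appended to a
derivation in `D` whose set of preceding lines is `S`, by one of the inference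
rules (±Δ, ±∂, ±σ).  `sep` selects separated reasoning. -/
inductive Step (sep : Bool) (D : DTheory) (S : Set TaggedLit) : TaggedLit → Prop
  | plusDelta (q : Lit) :
      (q ∈ D.facts ∨ ∃ r ∈ D.Rs q, ∀ a ∈ r.body, TaggedLit.pDelta a ∈ S) →
      Step sep D S (TaggedLit.pDelta q)
  | minusDelta (q : Lit) :
      q ∉ D.facts →
      (∀ r ∈ D.Rs q, ∃ a ∈ r.body, TaggedLit.mDelta a ∈ S) →
      Step sep D S (TaggedLit.mDelta q)
  | plusPartial (q : Lit) :
      (TaggedLit.pDelta q ∈ S ∨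
        ((∃ r ∈ D.RD sep q, ∀ a ∈ r.body, TaggedLit.pPartial a ∈ S) ∧
         TaggedLit.mDelta q.compl ∈ S ∧
         (∀ s ∈ D.Rall q.compl,
            (∃ a ∈ s.body, TaggedLit.mPartial a ∈ S) ∨
            (∃ t ∈ D.RD sep q, D.sup t s ∧ ∀ a ∈ t.body, TaggedLit.pPartial a ∈ S)))) →
      Step sep D S (TaggedLit.pPartial q)
  | minusPartial (q : Lit) :
      TaggedLit.mDelta q ∈ S →
      ((∀ r ∈ D.RD sep q, ∃ a ∈ r.body, TaggedLit.mPartial a ∈ S) ∨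
       TaggedLit.pDelta q.compl ∈ S ∨
       (∃ s ∈ D.Rall q.compl,
          (∀ a ∈ s.body, TaggedLit.pPartial a ∈ S) ∧
          (∀ t ∈ D.RD sep q,
             (∃ a ∈ t.body, TaggedLit.mPartial a ∈ S) ∨ ¬ D.sup t s))) →
      Step sep D S (TaggedLit.mPartial q)
  | plusSigma (q : Lit) :
      (∃ r ∈ D.RD sep q, ∀ a ∈ r.body, TaggedLit.pPartial a ∈ S) →
      Step sep D S (TaggedLit.pSigma q)
  | minusSigma (q : Lit) :
      (∀ r ∈ D.RD sep q, ∃ a ∈ r.body, TaggedLit.mPartial a ∈ S) →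
      Step sep D S (TaggedLit.mSigma q)

/-- Derivations: finite sequences of tagged literals, each justified by its
predecessors via the inference rules. -/
inductive IsDerivation (sep : Bool) (D : DTheory) : List TaggedLit → Prop
  | nil : IsDerivation sep D []
  | snoc (P : List TaggedLit) (c : TaggedLit) :
      IsDerivation sep D P → Step sep D {x | x ∈ P} c →
      IsDerivation sep D (P ++ [c])

/-- D ⊢ c : the tagged literal c occurs in some derivation in D. -/
def Proves (sep : Bool) (D : DTheory) (c : TaggedLit) : Prop :=
  ∃ P, IsDerivation sep D P ∧ c ∈ P

/-- A basic defeasible theory: no defeaters and an empty superiority relation. -/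
def DTheory.Basic (D : DTheory) : Prop :=
  (∀ r ∈ D.rules, r.kind ≠ RuleKind.defeater) ∧ (∀ r s : Rule, ¬ D.sup r s)

/-- D has duplicated strict rules: every strict rule has a defeasible copy. -/
def DTheory.DupStrictRules (D : DTheory) : Prop :=
  ∀ r ∈ D.rules, r.kind = RuleKind.strict →
    Rule.mk r.body r.head RuleKind.defeasible ∈ D.rules

/-- The literals of the (finite) language of D: all literals over atoms
occurring in D. -/
def DTheory.lits (D : DTheory) : Set Lit :=
  {l | (∃ f ∈ D.facts, f.atom = l.atom) ∨
       ∃ r ∈ D.rules, r.head.atom = l.atom ∨ ∃ a ∈ r.body, a.atom = l.atom}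

/-!
Write `r'` for `r` with `q` deleted from its body, and `D'` for the resulting theory. Every
inference rule only asks whether some rule of a given head and kind has its body established
(`+Δ`, `+∂`), or whether every such rule is refuted through a body literal (`−Δ`, `−∂`), plus
superiority, which is empty here. Going from `D'` to `D`, a use of `r'` becomes a use of `r`
once a derivation of `+Δq` and `+∂q` is prepended. Going from `D` to `D'`, a refutation of `r`
is one of `r'`, because the refuting literal cannot be `q`: neither `−Δq` nor `−∂q` is
provable in `D`.
-/

open TaggedLit

section Derivations

variable {sep : Bool} {D : DTheory}

theorem Proves.exists_step {c : TaggedLit} (h : Proves sep D c) :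
    ∃ S : Set TaggedLit, (∀ x ∈ S, Proves sep D x) ∧ Step sep D S c := by
  obtain ⟨P, hP, hc⟩ := h
  induction hP with
  | nil => simp at hc
  | snoc P c' hP hs ih =>
    rcases List.mem_append.mp hc with hc | hc
    · exact ih hc
    · obtain rfl := List.mem_singleton.mp hc
      exact ⟨_, fun x hx => ⟨P, hP, hx⟩, hs⟩

theorem Proves.not_mDelta {l : Lit} (h : Proves sep D (pDelta l)) :
    ¬ Proves sep D (mDelta l) := by
  obtain ⟨P, hP, hl⟩ := h
  induction hP generalizing l with
  | nil => simp at hl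
  | snoc P c hP hs ih =>
    rcases List.mem_append.mp hl with hl | hl
    · exact ih hl
    obtain rfl := List.mem_singleton.mp hl
    intro hm
    obtain ⟨S, hS, hstep⟩ := hm.exists_step
    cases hstep with
    | minusDelta _ hnf hall =>
      cases hs with
      | plusDelta _ h =>
        rcases h with hf | ⟨s, hs, hbody⟩
        · exact hnf hf
        · obtain ⟨a, ha, hma⟩ := hall s hs
          exact ih (hbody a ha) (hS _ hma)

theorem Proves.mDelta_of_mPartial {l : Lit} (h : Proves sep D (mPartial l)) :
    Proves sep D (mDelta l) := by
  obtain ⟨S, hS, hstep⟩ := h.exists_step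
  cases hstep with
  | minusPartial _ hΔ _ => exact hS _ hΔ

theorem Proves.of_step_simulation {sep' : Bool} {D' : DTheory} {Q₀ : List TaggedLit}
    (hQ₀ : IsDerivation sep' D' Q₀)
    (hstep : ∀ (P Q : List TaggedLit) c, IsDerivation sep D P → (∀ x ∈ P, x ∈ Q) →
      (∀ x ∈ Q₀, x ∈ Q) → Step sep D {x | x ∈ P} c → Step sep' D' {x | x ∈ Q} c)
    {c : TaggedLit} (h : Proves sep D c) : Proves sep' D' c := by
  suffices ∀ P, IsDerivation sep D P →
      ∃ Q, IsDerivation sep' D' Q ∧ (∀ x ∈ P, x ∈ Q) ∧ ∀ x ∈ Q₀, x ∈ Q by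
    obtain ⟨P, hP, hc⟩ := h
    obtain ⟨Q, hQ, hPQ, -⟩ := this P hP
    exact ⟨Q, hQ, hPQ c hc⟩
  intro P hP
  induction hP with
  | nil => exact ⟨Q₀, hQ₀, by simp, fun _ => id⟩
  | snoc P c hP hs ih =>
    obtain ⟨Q, hQ, hPQ, hQ₀Q⟩ := ih
    refine ⟨Q ++ [c], .snoc Q c hQ (hstep P Q c hP hPQ hQ₀Q hs), fun x hx => ?_,
      fun x hx => List.mem_append_left _ (hQ₀Q x hx)⟩
    rcases List.mem_append.mp hx with hx | hx
    · exact List.mem_append_left _ (hPQ x hx)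
    · exact List.mem_append_right _ hx

end Derivations

namespace DTheory

def rulesWith (D : DTheory) (K : RuleKind → Prop) (p : Lit) : Set Rule :=
  {s | s ∈ D.rules ∧ K s.kind ∧ s.head = p}

theorem Rs_eq_rulesWith (D : DTheory) (p : Lit) :
    D.Rs p = D.rulesWith (· = .strict) p := rfl

theorem RD_eq_rulesWith (D : DTheory) (sep : Bool) (p : Lit) :
    D.RD sep p = D.rulesWith (fun k => if sep then k = .defeasible else k ≠ .defeater) p := by
  cases sep <;> rfl

theorem Rall_eq_rulesWith (D : DTheory) (p : Lit) :
    D.Rall p = D.rulesWith (fun _ => True) p := by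
  ext s
  simp [Rall, rulesWith]

def Covers (D D' : DTheory) (τ : Lit → TaggedLit) (S T : Set TaggedLit) : Prop :=
  ∀ s ∈ D.rules, (∀ a ∈ s.body, τ a ∈ S) →
    ∃ s' ∈ D'.rules, s'.head = s.head ∧ s'.kind = s.kind ∧ ∀ a ∈ s'.body, τ a ∈ T

variable {D D' : DTheory} {τ : Lit → TaggedLit} {S T : Set TaggedLit}

theorem Covers.of_forall_ne {r r' : Rule} (hST : S ⊆ T)
    (hrules : ∀ s ∈ D.rules, s ≠ r → s ∈ D'.rules) (hr' : r' ∈ D'.rules)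
    (hhead : r'.head = r.head) (hkind : r'.kind = r.kind)
    (hbody : (∀ a ∈ r.body, τ a ∈ S) → ∀ a ∈ r'.body, τ a ∈ T) :
    D.Covers D' τ S T := by
  intro s hs hsS
  by_cases hsr : s = r
  · subst hsr
    exact ⟨r', hr', hhead, hkind, hbody hsS⟩
  · exact ⟨s, hrules s hs hsr, rfl, rfl, fun a ha => hST (hsS a ha)⟩

theorem Covers.exists_rulesWith (h : D.Covers D' τ S T) {K : RuleKind → Prop} {p : Lit}
    (hs : ∃ s ∈ D.rulesWith K p, ∀ a ∈ s.body, τ a ∈ S) :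
    ∃ s' ∈ D'.rulesWith K p, ∀ a ∈ s'.body, τ a ∈ T := by
  obtain ⟨s, ⟨hs, hK, hp⟩, hsS⟩ := hs
  obtain ⟨s', hs', hhead, hkind, hs'T⟩ := h s hs hsS
  exact ⟨s', ⟨hs', hkind ▸ hK, hhead ▸ hp⟩, hs'T⟩

/-- Read on complements, covering says that a rule of `D'` not refuted in `T` has a
counterpart in `D` not refuted in `S`. -/
theorem Covers.forall_rulesWith (h : D'.Covers D τ Tᶜ Sᶜ) {K : RuleKind → Prop} {p : Lit}
    (hall : ∀ s ∈ D.rulesWith K p, ∃ a ∈ s.body, τ a ∈ S) :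
    ∀ s' ∈ D'.rulesWith K p, ∃ a ∈ s'.body, τ a ∈ T := by
  intro s' hs'
  by_contra hne
  push Not at hne
  obtain ⟨s, hs, hsS⟩ := h.exists_rulesWith ⟨s', hs', hne⟩
  obtain ⟨a, ha, haS⟩ := hall s hs
  exact hsS a ha haS

end DTheory

open DTheory

theorem Step.of_covers {sep : Bool} {D D' : DTheory} {S T : Set TaggedLit}
    (hfacts : D.facts = D'.facts) (hsup : ∀ t s, ¬ D.sup t s) (hsup' : ∀ t s, ¬ D'.sup t s)
    (hST : S ⊆ T)
    (hΔ : D.Covers D' pDelta S T) (hpart : D.Covers D' pPartial S T)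
    (hΔ' : D'.Covers D mDelta Tᶜ Sᶜ) (hpart' : D'.Covers D mPartial Tᶜ Sᶜ)
    {c : TaggedLit} (h : Step sep D S c) : Step sep D' T c := by
  cases h with
  | plusDelta p h =>
    rw [Rs_eq_rulesWith] at h
    exact .plusDelta p (h.imp (hfacts ▸ ·) hΔ.exists_rulesWith)
  | minusDelta p hf h =>
    rw [Rs_eq_rulesWith] at h
    exact .minusDelta p (hfacts ▸ hf) (hΔ'.forall_rulesWith h)
  | plusPartial p h =>
    rw [RD_eq_rulesWith, Rall_eq_rulesWith] at h
    refine .plusPartial p (h.imp (hST ·) fun ⟨hr, hcompl, hatt⟩ => ⟨?_, hST hcompl, ?_⟩)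
    · rw [RD_eq_rulesWith]
      exact hpart.exists_rulesWith hr
    · rw [Rall_eq_rulesWith]
      have hatt : ∀ s ∈ D.rulesWith (fun _ => True) p.compl,
          ∃ a ∈ s.body, mPartial a ∈ S := fun s hs =>
        (hatt s hs).resolve_right fun ⟨t, _, hts, _⟩ => hsup t s hts
      exact fun s' hs' => .inl (hpart'.forall_rulesWith hatt s' hs')
  | minusPartial p hΔp h =>
    rw [RD_eq_rulesWith, Rall_eq_rulesWith] at h
    refine .minusPartial p (hST hΔp) ?_
    rw [RD_eq_rulesWith, Rall_eq_rulesWith]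
    rcases h with h | h | h
    · exact .inl (hpart'.forall_rulesWith h)
    · exact .inr (.inl (hST h))
    · obtain ⟨s', hs', hs'T⟩ := hpart.exists_rulesWith (h.imp fun _ => And.imp_right And.left)
      exact .inr (.inr ⟨s', hs', hs'T, fun t _ => .inr (hsup' t s')⟩)
  | plusSigma p h =>
    rw [RD_eq_rulesWith] at h
    exact .plusSigma p (by rw [RD_eq_rulesWith]; exact hpart.exists_rulesWith h)
  | minusSigma p h =>
    rw [RD_eq_rulesWith] at h
    exact .minusSigma p (by rw [RD_eq_rulesWith]; exact hpart'.forall_rulesWith h)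

namespace DTheory

def eraseFromBody (D : DTheory) (r : Rule) (q : Lit) : DTheory :=
  ⟨D.facts, insert ⟨r.body.erase q, r.head, r.kind⟩ (D.rules.erase r), D.sup, D.sup_acyclic⟩

variable {D : DTheory} {r : Rule} {q : Lit} {S T : Set TaggedLit}

theorem mem_eraseFromBody_of_ne {s : Rule} (hs : s ∈ D.rules) (hsr : s ≠ r) :
    s ∈ (D.eraseFromBody r q).rules :=
  Finset.mem_insert_of_mem (Finset.mem_erase.mpr ⟨hsr, hs⟩)

theorem mem_of_mem_eraseFromBody {s : Rule} (hs : s ∈ (D.eraseFromBody r q).rules)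
    (hsr : s ≠ ⟨r.body.erase q, r.head, r.kind⟩) : s ∈ D.rules :=
  Finset.mem_of_mem_erase ((Finset.mem_insert.mp hs).resolve_left hsr)

theorem covers_eraseFromBody {τ : Lit → TaggedLit} (hST : S ⊆ T) :
    D.Covers (D.eraseFromBody r q) τ S T :=
  .of_forall_ne hST (fun _ => mem_eraseFromBody_of_ne) (Finset.mem_insert_self _ _) rfl rfl
    fun h a ha => hST (h a (Finset.mem_of_mem_erase ha))

theorem eraseFromBody_covers {τ : Lit → TaggedLit} (hr : r ∈ D.rules) (hST : S ⊆ T)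
    (hq : τ q ∈ T) : (D.eraseFromBody r q).Covers D τ S T :=
  .of_forall_ne hST (fun _ => mem_of_mem_eraseFromBody) hr rfl rfl fun h a ha => by
    by_cases haq : a = q
    · exact haq ▸ hq
    · exact hST (h a (Finset.mem_erase.mpr ⟨haq, ha⟩))

end DTheory

section EraseFromBody

variable {sep : Bool} {D : DTheory} {r : Rule} {q : Lit} {S T : Set TaggedLit}

theorem Step.eraseFromBody {c : TaggedLit} (hsup : ∀ t s, ¬ D.sup t s) (hr : r ∈ D.rules)
    (hST : S ⊆ T) (hΔ : mDelta q ∉ S) (hpart : mPartial q ∉ S) (h : Step sep D S c) :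
    Step sep (D.eraseFromBody r q) T c :=
  have hTS : Tᶜ ⊆ Sᶜ := Set.compl_subset_compl.mpr hST
  h.of_covers (D := D) (D' := D.eraseFromBody r q) rfl hsup hsup hST
    (covers_eraseFromBody hST) (covers_eraseFromBody hST)
    (eraseFromBody_covers hr hTS hΔ) (eraseFromBody_covers hr hTS hpart)

theorem Step.of_eraseFromBody {c : TaggedLit} (hsup : ∀ t s, ¬ D.sup t s) (hr : r ∈ D.rules)
    (hST : S ⊆ T) (hΔ : pDelta q ∈ T) (hpart : pPartial q ∈ T)
    (h : Step sep (D.eraseFromBody r q) S c) : Step sep D T c :=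
  have hTS : Tᶜ ⊆ Sᶜ := Set.compl_subset_compl.mpr hST
  h.of_covers (D := D.eraseFromBody r q) (D' := D) rfl hsup hsup hST
    (eraseFromBody_covers hr hST hΔ) (eraseFromBody_covers hr hST hpart)
    (covers_eraseFromBody hTS) (covers_eraseFromBody hTS)

end EraseFromBody

theorem delete_proved_lit_strict_general (D : DTheory) (r : Rule) (q : Lit)
    (hBasic : D.Basic) (hr : r ∈ D.rules)
    (hprov : Proves true D (TaggedLit.pDelta q)) :
    ∀ c : TaggedLit,
      Proves true D c ↔
      Proves true
        ⟨D.facts,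
         insert (Rule.mk (r.body.erase q) r.head r.kind) (D.rules.erase r),
         D.sup, D.sup_acyclic⟩ c := by
  obtain ⟨P₀, hP₀, hqP₀⟩ := hprov
  have hΔ : ¬ Proves true D (mDelta q) := Proves.not_mDelta ⟨P₀, hP₀, hqP₀⟩
  have hpart : ¬ Proves true D (mPartial q) := fun h => hΔ h.mDelta_of_mPartial
  have hQ₀ : IsDerivation true D (P₀ ++ [pPartial q]) :=
    .snoc _ _ hP₀ (.plusPartial q (.inl hqP₀))
  intro c
  constructor
  · exact Proves.of_step_simulation (D' := D.eraseFromBody r q) .nil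
      fun P _ _ hP hPQ _ => Step.eraseFromBody hBasic.2 hr hPQ
        (fun h => hΔ ⟨P, hP, h⟩) (fun h => hpart ⟨P, hP, h⟩)
  · exact Proves.of_step_simulation (D := D.eraseFromBody r q) hQ₀
      fun _ _ _ _ hPQ hQ₀Q => Step.of_eraseFromBody hBasic.2 hr hPQ
        (hQ₀Q _ (by simp [hqP₀])) (hQ₀Q _ (by simp))

/-- deleting a definitely-proved literal q from the body of a
strict rule r of a basic defeasible theory D (separated reasoning) preserves
all consequences (including extended conclusions). -/
theorem delete_proved_lit_strict (D : DTheory) (r : Rule) (q : Lit)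
    (hBasic : D.Basic) (hr : r ∈ D.rules) (hk : r.kind = RuleKind.strict)
    (hq : q ∈ r.body)
    (hprov : Proves true D (TaggedLit.pDelta q)) :
    ∀ c : TaggedLit,
      Proves true D c ↔
      Proves true
        ⟨D.facts,
         insert (Rule.mk (r.body.erase q) r.head r.kind) (D.rules.erase r),
         D.sup, D.sup_acyclic⟩ c :=
  delete_proved_lit_strict_general D r q hBasic hr hprov
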